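/- Consider the two n×n 0/1 matrices A_b (the cyclic shift: (A_b)_{i,j} = 1 iff j ≡ i+1 mod n) and A_a which equals the identity except it additionally has a 1 in entry (n,1) (i.e., edges i→i for all i plus n→1). Then the set {A_a, A_b} is primitive, but every entrywise positive product of these matrices has length at least n(n−1). -/

import Mathlib

/-!
Read `0 < M i j` as an edge `i → j`, so that a positive entry of a product of nonnegative
matrices is a walk. `A_b` sends `i` to `i + 1 mod n`, and `A_a` fixes every vertex and also sends
`n - 1` to `0`. Along a walk, each factor therefore either advances the position by one modulo `n`
or (only for `A_a`) leaves it in place, and before each use of the corner edge `n - 1 → 0` the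
walk has to be carried round to `n - 1` by `n - 1` factors `A_b`. A walk from `0` using the
corner edge `m` times ends at `#A_b + m mod n`; if the product is positive, the column
`#A_b - 1 mod n` forces `m ≡ -1 mod n`, so `m ≥ n - 1`, hence `#A_a ≥ n - 1` and `#A_b ≥ (n - 1)²`.

Conversely `A_b ^ (n - 1) * A_a` has all edges `i → i - 1` and a loop at `0`, so its `2n`-th
power is positive.
-/

namespace Matrix

variable {ι R : Type*} [Fintype ι] [DecidableEq ι] [Semiring R]

def nonnegSubmonoid [PartialOrder R] [IsOrderedRing R] : Submonoid (Matrix ι ι R) where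
  carrier := {A | ∀ i j, 0 ≤ A i j}
  mul_mem' hA hB i j := Finset.sum_nonneg fun k _ => mul_nonneg (hA i k) (hB k j)
  one_mem' i j := by rw [one_apply]; split_ifs <;> simp

variable [LinearOrder R] [IsStrictOrderedRing R]

theorem mul_apply_pos_iff {A B : Matrix ι ι R} (hA : A ∈ nonnegSubmonoid)
    (hB : B ∈ nonnegSubmonoid) {i j : ι} : 0 < (A * B) i j ↔ ∃ k, 0 < A i k ∧ 0 < B k j := by
  rw [mul_apply, Finset.sum_pos_iff_of_nonneg fun k _ => mul_nonneg (hA i k) (hB k j)]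
  exact exists_congr fun k => ⟨fun ⟨_, h⟩ => ⟨pos_of_mul_pos_left h (hB k j),
    pos_of_mul_pos_right h (hA i k)⟩, fun ⟨h₁, h₂⟩ => ⟨Finset.mem_univ k, mul_pos h₁ h₂⟩⟩

theorem mul_apply_pos {A B : Matrix ι ι R} (hA : A ∈ nonnegSubmonoid) (hB : B ∈ nonnegSubmonoid)
    {i k j : ι} (h₁ : 0 < A i k) (h₂ : 0 < B k j) : 0 < (A * B) i j :=
  (mul_apply_pos_iff hA hB).2 ⟨k, h₁, h₂⟩

theorem pow_apply_pos_of_diag_pos {A : Matrix ι ι R} (hA : A ∈ nonnegSubmonoid) {i : ι}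
    (hi : 0 < A i i) (k : ℕ) : 0 < (A ^ k) i i := by
  induction k with
  | zero => simp
  | succ k ih => rw [pow_succ]; exact mul_apply_pos (pow_mem hA k) hA ih hi

section Cyclic

variable {n : ℕ} [NeZero n] {A : Matrix (Fin n) (Fin n) R}
open Fin.CommRing

theorem pow_apply_sub_pos (hA : A ∈ nonnegSubmonoid) (hsub : ∀ i, 0 < A i (i - 1)) (k : ℕ)
    (i : Fin n) : 0 < (A ^ k) i (i - k) := by
  induction k generalizing i with
  | zero => simp
  | succ k ih =>
    rw [pow_succ', show i - ((k + 1 : ℕ) : Fin n) = i - 1 - k by push_cast; ring]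
    exact mul_apply_pos hA (pow_mem hA k) (hsub i) (ih (i - 1))

/-- Walk down from `i` to `0`, wait at `0`, and walk down from `0` to `j`. -/
theorem pow_two_mul_apply_pos (hA : A ∈ nonnegSubmonoid) (hsub : ∀ i, 0 < A i (i - 1))
    (h₀ : 0 < A 0 0) (i j : Fin n) : 0 < (A ^ (2 * n)) i j := by
  have hi : 0 < (A ^ (i : ℕ)) i 0 := by simpa using pow_apply_sub_pos hA hsub i i
  have hj : 0 < (A ^ (n - j)) 0 j := by
    simpa [Nat.cast_sub j.is_lt.le] using pow_apply_sub_pos hA hsub (n - j) 0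
  rw [show 2 * n = i + (n + j - i) + (n - j) by omega, pow_add, pow_add]
  exact mul_apply_pos (mul_mem (pow_mem hA _) (pow_mem hA _)) (pow_mem hA _)
    (mul_apply_pos (pow_mem hA _) (pow_mem hA _) hi (pow_apply_pos_of_diag_pos hA h₀ _)) hj

end Cyclic

end Matrix

theorem List.count_add_count_le_length {α : Type*} [DecidableEq α] {a b : α} (hab : a ≠ b)
    (l : List α) : l.count a + l.count b ≤ l.length := by
  rw [List.length_eq_countP_add_countP (· == a)]
  refine Nat.add_le_add_left (List.countP_mono_left fun x _ hx => ?_) _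
  simp only [beq_iff_eq, decide_eq_true_eq] at hx ⊢
  exact hx ▸ hab.symm

open Matrix

def cyclicShift (R : Type*) [Zero R] [One R] (n : ℕ) : Matrix (Fin n) (Fin n) R :=
  of fun i j => if (j : ℕ) = ((i : ℕ) + 1) % n then 1 else 0

/-- `I + E_{n,1}` with `0`-based indices. -/
def oneAddCorner (R : Type*) [Zero R] [One R] (n : ℕ) : Matrix (Fin n) (Fin n) R :=
  of fun i j => if i = j ∨ ((i : ℕ) = n - 1 ∧ (j : ℕ) = 0) then 1 else 0

section

variable {R : Type*} [Semiring R] [LinearOrder R] [IsStrictOrderedRing R] {n : ℕ}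

theorem cyclicShift_mem_nonnegSubmonoid : cyclicShift R n ∈ nonnegSubmonoid := by
  intro i j; simp only [cyclicShift, of_apply]; split_ifs <;> simp

theorem oneAddCorner_mem_nonnegSubmonoid : oneAddCorner R n ∈ nonnegSubmonoid := by
  intro i j; simp only [oneAddCorner, of_apply]; split_ifs <;> simp

theorem mem_nonnegSubmonoid_of_eq_or_eq {P : Matrix (Fin n) (Fin n) R}
    (hP : P = oneAddCorner R n ∨ P = cyclicShift R n) : P ∈ nonnegSubmonoid :=
  hP.elim (· ▸ oneAddCorner_mem_nonnegSubmonoid) (· ▸ cyclicShift_mem_nonnegSubmonoid)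

theorem cyclicShift_apply_pos_iff {i j : Fin n} :
    0 < cyclicShift R n i j ↔ (j : ℕ) = ((i : ℕ) + 1) % n := by
  simp only [cyclicShift, of_apply]; split_ifs with h <;> simp [h]

theorem oneAddCorner_apply_pos_iff {i j : Fin n} :
    0 < oneAddCorner R n i j ↔ i = j ∨ ((i : ℕ) = n - 1 ∧ (j : ℕ) = 0) := by
  simp only [oneAddCorner, of_apply]; split_ifs with h <;> simp [h]

theorem oneAddCorner_ne_cyclicShift (hn : 2 ≤ n) : oneAddCorner R n ≠ cyclicShift R n := by
  have : NeZero n := ⟨by omega⟩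
  intro h
  have h₀ := (oneAddCorner_apply_pos_iff (R := R) (n := n) (i := 0) (j := 0)).2 (Or.inl rfl)
  rw [h, cyclicShift_apply_pos_iff] at h₀
  simp [Nat.mod_eq_of_lt (show 1 < n by omega)] at h₀

/-- `m` is the number of uses of the corner edge `n - 1 → 0` along a walk from `i` to `j`. -/
theorem exists_corner_count_of_list_prod_apply_pos (hn : 2 ≤ n)
    {l : List (Matrix (Fin n) (Fin n) R)}
    (hl : ∀ P ∈ l, P = oneAddCorner R n ∨ P = cyclicShift R n) {i j : Fin n}
    (h : 0 < l.prod i j) :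
    ∃ m ≤ l.count (oneAddCorner R n), m * (n - 1) ≤ i + l.count (cyclicShift R n) ∧
      (j : ℕ) ≡ i + l.count (cyclicShift R n) + m [MOD n] := by
  induction l generalizing i with
  | nil =>
    obtain rfl : i = j := by
      by_contra hij
      simp [one_apply_ne hij] at h
    exact ⟨0, by simp, by simp, by simp; rfl⟩
  | cons P l ih =>
    have hne := oneAddCorner_ne_cyclicShift (R := R) hn
    have hl' : ∀ Q ∈ l, Q = oneAddCorner R n ∨ Q = cyclicShift R n :=
      fun Q hQ => hl Q (List.mem_cons_of_mem _ hQ)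
    rw [List.prod_cons, mul_apply_pos_iff (mem_nonnegSubmonoid_of_eq_or_eq (hl P List.mem_cons_self))
      (Submonoid.list_prod_mem _ fun Q hQ => mem_nonnegSubmonoid_of_eq_or_eq (hl' Q hQ))] at h
    obtain ⟨k, hik, hkj⟩ := h
    obtain ⟨m, hm, hshift, hmod⟩ := ih hl' hkj
    rcases hl P List.mem_cons_self with rfl | rfl
    · rw [List.count_cons_self, List.count_cons_of_ne hne]
      rcases oneAddCorner_apply_pos_iff.1 hik with rfl | ⟨hi, hk⟩
      · exact ⟨m, by omega, hshift, hmod⟩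
      · rw [hk] at hshift hmod
        refine ⟨m + 1, by omega, by rw [hi, add_one_mul]; omega, hmod.trans ?_⟩
        rw [hi, show n - 1 + _ + (m + 1) = n + (0 + l.count (cyclicShift R n) + m) by omega]
        exact Nat.add_modEq_left.symm
    · rw [List.count_cons_self, List.count_cons_of_ne hne.symm]
      have hk := cyclicShift_apply_pos_iff.1 hik
      have hki : (k : ℕ) ≤ i + 1 := hk ▸ Nat.mod_le _ _
      refine ⟨m, hm, by omega, hmod.trans ?_⟩
      rw [hk, ← add_assoc, add_right_comm _ _ 1]
      exact ((Nat.mod_modEq _ n).add_right _).add_right _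

theorem mul_sub_one_le_length_of_list_prod_pos (hn : 2 ≤ n)
    {l : List (Matrix (Fin n) (Fin n) R)}
    (hl : ∀ P ∈ l, P = oneAddCorner R n ∨ P = cyclicShift R n)
    (hpos : ∀ i j, 0 < l.prod i j) : n * (n - 1) ≤ l.length := by
  have : NeZero n := ⟨by omega⟩
  set a := l.count (oneAddCorner R n)
  set b := l.count (cyclicShift R n)
  obtain ⟨m, hma, hmb, hmod⟩ := exists_corner_count_of_list_prod_apply_pos hn hl
    (hpos 0 ⟨(b + (n - 1)) % n, Nat.mod_lt _ (NeZero.pos n)⟩)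
  have hm : m % n = n - 1 := by
    have : m ≡ n - 1 [MOD n] :=
      (Nat.ModEq.add_left_cancel' b ((Nat.mod_modEq _ n).symm.trans (by simpa using hmod))).symm
    rwa [Nat.ModEq, Nat.mod_eq_of_lt (Nat.sub_lt (NeZero.pos n) one_pos)] at this
  have hm' : n - 1 ≤ m := hm ▸ Nat.mod_le m n
  calc n * (n - 1) = (n - 1) * (n - 1) + (n - 1) := by
        rw [← add_one_mul, Nat.sub_add_cancel (by omega : 1 ≤ n)]
    _ ≤ b + a := add_le_add ((Nat.mul_le_mul_right _ hm').trans (by simpa using hmb)) (hm'.trans hma)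
    _ ≤ l.length := add_comm a b ▸ List.count_add_count_le_length (oneAddCorner_ne_cyclicShift hn) l

variable [NeZero n]
open Fin.CommRing

theorem cyclicShift_apply_add_one_pos (i : Fin n) : 0 < cyclicShift R n i (i + 1) := by
  rw [cyclicShift_apply_pos_iff, Fin.val_add, Fin.val_one', Nat.add_mod_mod]

theorem cyclicShift_pow_apply_pos (k : ℕ) (i : Fin n) : 0 < (cyclicShift R n ^ k) i (i + k) := by
  induction k with
  | zero => simp
  | succ k ih =>
    rw [pow_succ, Nat.cast_succ, ← add_assoc]
    exact mul_apply_pos (pow_mem cyclicShift_mem_nonnegSubmonoid k)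
      cyclicShift_mem_nonnegSubmonoid ih (cyclicShift_apply_add_one_pos _)

theorem exists_list_prod_pos : ∃ l : List (Matrix (Fin n) (Fin n) R),
    (∀ P ∈ l, P = oneAddCorner R n ∨ P = cyclicShift R n) ∧ l ≠ [] ∧ ∀ i j, 0 < l.prod i j := by
  set A := cyclicShift R n ^ (n - 1) * oneAddCorner R n
  have hA : A ∈ nonnegSubmonoid :=
    mul_mem (pow_mem cyclicShift_mem_nonnegSubmonoid _) oneAddCorner_mem_nonnegSubmonoid
  have hpred : ((n - 1 : ℕ) : Fin n) = -1 := by rw [Nat.cast_sub NeZero.one_le]; simp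
  have hsub (i : Fin n) : 0 < A i (i - 1) := by
    refine mul_apply_pos (pow_mem cyclicShift_mem_nonnegSubmonoid _)
      oneAddCorner_mem_nonnegSubmonoid (cyclicShift_pow_apply_pos (n - 1) i) ?_
    rw [hpred, ← sub_eq_add_neg]
    exact oneAddCorner_apply_pos_iff.2 (Or.inl rfl)
  have h₀ : 0 < A 0 0 := by
    refine mul_apply_pos (pow_mem cyclicShift_mem_nonnegSubmonoid _)
      oneAddCorner_mem_nonnegSubmonoid (cyclicShift_pow_apply_pos (n - 1) 0) ?_
    refine oneAddCorner_apply_pos_iff.2 (Or.inr ⟨?_, rfl⟩)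
    rw [zero_add, Fin.val_natCast, Nat.mod_eq_of_lt (Nat.sub_lt (NeZero.pos n) one_pos)]
  refine ⟨(List.replicate (2 * n) (List.replicate (n - 1) (cyclicShift R n) ++
    [oneAddCorner R n])).flatten, ?_, ?_, ?_⟩
  · simp only [List.mem_flatten, List.mem_replicate]
    aesop
  · simp [NeZero.ne n]
  · rw [List.prod_flatten, List.map_replicate, List.prod_replicate, List.prod_append,
      List.prod_replicate, List.prod_singleton]
    exact pow_two_mul_apply_pos hA hsub h₀

end

theorem stmt16 (n : ℕ) (hn : 2 ≤ n)
    (Ab : Matrix (Fin n) (Fin n) ℝ)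
    (hAb : Ab = Matrix.of fun i j : Fin n => if (j : ℕ) = ((i : ℕ) + 1) % n then 1 else 0)
    (Aa : Matrix (Fin n) (Fin n) ℝ)
    (hAa : Aa = Matrix.of fun i j : Fin n =>
      if i = j ∨ ((i : ℕ) = n - 1 ∧ (j : ℕ) = 0) then 1 else 0) :
    (∃ l : List (Matrix (Fin n) (Fin n) ℝ),
        (∀ P ∈ l, P = Aa ∨ P = Ab) ∧ l ≠ [] ∧ ∀ i j, 0 < l.prod i j) ∧
    (∀ l : List (Matrix (Fin n) (Fin n) ℝ),
        (∀ P ∈ l, P = Aa ∨ P = Ab) → (∀ i j, 0 < l.prod i j) →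
        n * (n - 1) ≤ l.length) := by
  have : NeZero n := ⟨by omega⟩
  obtain rfl : Ab = cyclicShift ℝ n := hAb
  obtain rfl : Aa = oneAddCorner ℝ n := hAa
  exact ⟨exists_list_prod_pos, fun _ hl hpos => mul_sub_one_le_length_of_list_prod_pos hn hl hpos⟩
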